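/- arXiv:2006.00278 — 2 statements merged into one kernel-verified Lean document; each statement's English description precedes it below -/
import Mathlib

section
/- Let P and Q be mutually absolutely continuous probability measures with finite symmetrized Kullback-Leibler divergence, and let X be a random variable with finite variance under both. Then (E_P[X]-E_Q[X])² · (1/(KL(P,Q)+KL(Q,P)) - 1/4) ≤ max(Var_P(X), Var_Q(X)). -/
/-!
Put `c = (E_P X + E_Q X) / 2`. Since `P` and `Q` are probability measures,
`E_P X - E_Q X = ∫ (p - q) (X - c) dν`, and Cauchy–Schwarz with the weight `p + q` gives
`(E_P X - E_Q X)² ≤ (E_P (X - c)² + E_Q (X - c)²) · ∫ (p - q)² / (p + q) dν`.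
The first factor is `Var_P X + Var_Q X + (E_P X - E_Q X)² / 2`. The second (the triangular
discrimination) is at most half the symmetrized divergence, by the pointwise inequality
`2 (a - b)² / (a + b) ≤ (a - b) (log a - log b)`, which is `artanh x ≥ x` for
`x = (a - b) / (a + b)`. Solving the resulting quadratic inequality for `(E_P X - E_Q X)²` gives
the claim.
-/

open MeasureTheory ProbabilityTheory

namespace Real

-- Every term of the series of `x (log (1 + x) - log (1 - x))` is nonnegative; keep the first.
theorem two_mul_sq_le_mul_log_one_add_sub_log_one_sub {x : ℝ} (hx : |x| < 1) :
    2 * x ^ 2 ≤ x * (log (1 + x) - log (1 - x)) := by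
  have hsum := (hasSum_log_sub_log_of_abs_lt_one hx).mul_left x
  refine le_of_eq_of_le ?_ (le_hasSum hsum 0 fun k _ => ?_)
  · ring
  · rw [show x * (2 * (1 / (2 * (k : ℝ) + 1)) * x ^ (2 * k + 1))
        = 2 / (2 * k + 1) * (x ^ (k + 1)) ^ 2 by ring]
    positivity

theorem two_mul_sq_sub_div_add_le_sub_mul_log_sub_log {a b : ℝ} (ha : 0 < a) (hb : 0 < b) :
    2 * ((a - b) ^ 2 / (a + b)) ≤ (a - b) * (log a - log b) := by
  set x := (a - b) / (a + b)
  have hab : 0 < a + b := by positivity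
  have hx : |x| < 1 := by
    rw [abs_lt, lt_div_iff₀ hab, div_lt_iff₀ hab]; constructor <;> linarith
  have h1 : 1 + x = 2 * a / (a + b) := by simp only [x]; field_simp; ring
  have h2 : 1 - x = 2 * b / (a + b) := by simp only [x]; field_simp; ring
  have hlog : log (1 + x) - log (1 - x) = log a - log b := by
    rw [h1, h2, log_div (by positivity) hab.ne', log_div (by positivity) hab.ne',
      log_mul two_ne_zero ha.ne', log_mul two_ne_zero hb.ne']
    ring
  have key := two_mul_sq_le_mul_log_one_add_sub_log_one_sub hx
  rw [hlog] at key
  calc 2 * ((a - b) ^ 2 / (a + b)) = 2 * x ^ 2 * (a + b) := by simp only [x]; field_simp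
    _ ≤ x * (log a - log b) * (a + b) := mul_le_mul_of_nonneg_right key hab.le
    _ = (a - b) * (log a - log b) := by simp only [x]; field_simp

theorem two_mul_sq_sub_div_add_le_log_div_mul_add_log_div_mul {a b : ℝ} (ha : 0 ≤ a)
    (hb : 0 ≤ b) (hab : a = 0 ↔ b = 0) :
    2 * ((a - b) ^ 2 / (a + b)) ≤ log (a / b) * a + log (b / a) * b := by
  rcases ha.eq_or_lt with rfl | ha
  · simp [hab.mp rfl]
  have hb : 0 < b := hb.lt_of_ne' fun h => ha.ne' (hab.mpr h)
  rw [log_div ha.ne' hb.ne', log_div hb.ne' ha.ne']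
  linarith [two_mul_sq_sub_div_add_le_sub_mul_log_sub_log ha hb]

end Real

theorem integral_sub_const_sq {Ω : Type*} [MeasurableSpace Ω] {μ : Measure Ω}
    [IsProbabilityMeasure μ] {X : Ω → ℝ} (hX : MemLp X 2 μ) (c : ℝ) :
    ∫ ω, (X ω - c) ^ 2 ∂μ = variance X μ + (∫ ω, X ω ∂μ - c) ^ 2 := by
  have h := variance_eq_sub (X := fun ω => X ω - c) (hX.sub (memLp_const c))
  rw [variance_sub_const hX.aestronglyMeasurable] at h
  rw [h, integral_sub (hX.integrable one_le_two) (integrable_const c)]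
  simp

-- Proved through the discriminant of `t ↦ ∫ (t f + g)²` rather than in `L²`, so that only
-- `f * g` has to be measurable: in the application `X` is measurable for `P` and `Q`, not `ν`.
theorem sq_integral_mul_le {Ω : Type*} [MeasurableSpace Ω] {μ : Measure Ω} {f g : Ω → ℝ}
    (hfg : AEStronglyMeasurable (fun ω => f ω * g ω) μ)
    (hf : Integrable (fun ω => f ω ^ 2) μ) (hg : Integrable (fun ω => g ω ^ 2) μ) :
    (∫ ω, f ω * g ω ∂μ) ^ 2 ≤ (∫ ω, f ω ^ 2 ∂μ) * ∫ ω, g ω ^ 2 ∂μ := by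
  have hfg_int : Integrable (fun ω => f ω * g ω) μ := by
    refine (hf.add hg).mono' hfg (ae_of_all _ fun ω => ?_)
    rw [Pi.add_apply, Real.norm_eq_abs, abs_mul]
    nlinarith [two_mul_le_add_sq |f ω| |g ω|, sq_abs (f ω), sq_abs (g ω), abs_nonneg (f ω)]
  have hquad : ∀ t : ℝ, 0 ≤ (∫ ω, f ω ^ 2 ∂μ) * (t * t) + 2 * (∫ ω, f ω * g ω ∂μ) * t
      + ∫ ω, g ω ^ 2 ∂μ := by
    intro t
    have hexp : ∀ ω, (t * f ω + g ω) ^ 2 = t * t * f ω ^ 2 + 2 * t * (f ω * g ω) + g ω ^ 2 :=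
      fun ω => by ring
    have h0 : 0 ≤ ∫ ω, (t * f ω + g ω) ^ 2 ∂μ := integral_nonneg fun ω => sq_nonneg _
    have hfg_t : Integrable (fun ω => t * t * f ω ^ 2 + 2 * t * (f ω * g ω)) μ :=
      (hf.const_mul _).add (hfg_int.const_mul _)
    simp only [hexp] at h0
    rw [integral_add hfg_t hg,
      integral_add (hf.const_mul _) (hfg_int.const_mul _), integral_const_mul,
      integral_const_mul] at h0
    linarith
  have := discrim_le_zero hquad
  rw [discrim] at this
  linarith

section Densities

variable {Ω : Type*} [MeasurableSpace Ω] {ν : Measure Ω} {p : Ω → ℝ}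

theorem integral_withDensity_ofReal (hpm : Measurable p) (hp0 : ∀ ω, 0 ≤ p ω) (f : Ω → ℝ) :
    ∫ ω, f ω ∂(ν.withDensity fun ω => ENNReal.ofReal (p ω)) = ∫ ω, p ω * f ω ∂ν := by
  rw [integral_withDensity_eq_integral_toReal_smul (by fun_prop)
    (ae_of_all _ fun _ => ENNReal.ofReal_lt_top)]
  simp [ENNReal.toReal_ofReal (hp0 _)]

theorem integrable_withDensity_ofReal_iff (hpm : Measurable p) (hp0 : ∀ ω, 0 ≤ p ω)
    {f : Ω → ℝ} :
    Integrable f (ν.withDensity fun ω => ENNReal.ofReal (p ω)) ↔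
      Integrable (fun ω => p ω * f ω) ν := by
  rw [integrable_withDensity_iff_integrable_smul' (by fun_prop)
    (ae_of_all _ fun _ => ENNReal.ofReal_lt_top)]
  simp [ENNReal.toReal_ofReal (hp0 _)]

theorem ae_ne_zero_of_withDensity_absolutelyContinuous {f g : Ω → ENNReal} (hf : Measurable f)
    (hg : Measurable g) (h : ν.withDensity g ≪ ν.withDensity f) :
    ∀ᵐ ω ∂ν, g ω ≠ 0 → f ω ≠ 0 :=
  (ae_withDensity_iff hg).1 <| h.ae_le <| (ae_withDensity_iff hf).2 <| ae_of_all _ fun _ => id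

theorem ae_eq_zero_iff_eq_zero_of_withDensity_ofReal {q : Ω → ℝ} (hpm : Measurable p)
    (hqm : Measurable q) (hp0 : ∀ ω, 0 ≤ p ω) (hq0 : ∀ ω, 0 ≤ q ω)
    (hpq : (ν.withDensity fun ω => ENNReal.ofReal (p ω)) ≪
      ν.withDensity fun ω => ENNReal.ofReal (q ω))
    (hqp : (ν.withDensity fun ω => ENNReal.ofReal (q ω)) ≪
      ν.withDensity fun ω => ENNReal.ofReal (p ω)) :
    ∀ᵐ ω ∂ν, p ω = 0 ↔ q ω = 0 := by
  filter_upwards [ae_ne_zero_of_withDensity_absolutelyContinuous (by fun_prop) (by fun_prop) hpq,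
    ae_ne_zero_of_withDensity_absolutelyContinuous (by fun_prop) (by fun_prop) hqp] with ω h₁ h₂
  simp only [ne_eq, ENNReal.ofReal_eq_zero, not_le] at h₁ h₂
  rw [← not_iff_not, ← ne_eq, ← ne_eq, ← (hp0 ω).lt_iff_ne', ← (hq0 ω).lt_iff_ne']
  exact ⟨h₁, h₂⟩

end Densities

section SymmetrizedKL

variable {Ω : Type*} [MeasurableSpace Ω] {ν : Measure Ω}

theorem sq_integral_mul_le_integral_mul_sq_mul_integral_sq_div {u v w : Ω → ℝ}
    (hw : ∀ ω, 0 ≤ w ω) (hvw : ∀ ω, w ω = 0 → v ω = 0)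
    (hm : AEStronglyMeasurable (fun ω => v ω * u ω) ν)
    (hu : Integrable (fun ω => w ω * u ω ^ 2) ν) (hv : Integrable (fun ω => v ω ^ 2 / w ω) ν) :
    (∫ ω, v ω * u ω ∂ν) ^ 2 ≤ (∫ ω, w ω * u ω ^ 2 ∂ν) * ∫ ω, v ω ^ 2 / w ω ∂ν := by
  have hmul : ∀ ω, u ω * √(w ω) * (v ω / √(w ω)) = v ω * u ω := by
    intro ω
    rcases (hw ω).eq_or_lt with hw0 | hw0
    · simp [← hw0, hvw ω hw0.symm]
    · have : √(w ω) ≠ 0 := Real.sqrt_ne_zero'.mpr hw0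
      field_simp
  have hsq_left : ∀ ω, (u ω * √(w ω)) ^ 2 = w ω * u ω ^ 2 := fun ω => by
    rw [mul_pow, Real.sq_sqrt (hw ω), mul_comm]
  have hsq_right : ∀ ω, (v ω / √(w ω)) ^ 2 = v ω ^ 2 / w ω := fun ω => by
    rw [div_pow, Real.sq_sqrt (hw ω)]
  simpa only [hmul, hsq_left, hsq_right] using
    sq_integral_mul_le (f := fun ω => u ω * √(w ω)) (g := fun ω => v ω / √(w ω))
      (by simpa only [hmul] using hm) (by simpa only [hsq_left] using hu)
      (by simpa only [hsq_right] using hv)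

variable {p q : Ω → ℝ}

theorem integrable_sq_sub_div_add_and_two_mul_integral_le (hpm : Measurable p)
    (hqm : Measurable q) (hp0 : ∀ ω, 0 ≤ p ω) (hq0 : ∀ ω, 0 ≤ q ω)
    (hpq : ∀ᵐ ω ∂ν, p ω = 0 ↔ q ω = 0)
    (hklPQ : Integrable (fun ω => Real.log (p ω / q ω) * p ω) ν)
    (hklQP : Integrable (fun ω => Real.log (q ω / p ω) * q ω) ν) :
    Integrable (fun ω => (p ω - q ω) ^ 2 / (p ω + q ω)) ν ∧
      2 * ∫ ω, (p ω - q ω) ^ 2 / (p ω + q ω) ∂ν ≤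
        (∫ ω, Real.log (p ω / q ω) * p ω ∂ν) + ∫ ω, Real.log (q ω / p ω) * q ω ∂ν := by
  have hle : ∀ᵐ ω ∂ν, 2 * ((p ω - q ω) ^ 2 / (p ω + q ω)) ≤
      Real.log (p ω / q ω) * p ω + Real.log (q ω / p ω) * q ω :=
    hpq.mono fun ω h =>
      Real.two_mul_sq_sub_div_add_le_log_div_mul_add_log_div_mul (hp0 ω) (hq0 ω) h
  have hnonneg : ∀ ω, 0 ≤ (p ω - q ω) ^ 2 / (p ω + q ω) := fun ω =>
    div_nonneg (sq_nonneg _) (add_nonneg (hp0 ω) (hq0 ω))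
  have hint : Integrable (fun ω => (p ω - q ω) ^ 2 / (p ω + q ω)) ν := by
    refine (hklPQ.add hklQP).mono'
      (((hpm.sub hqm).pow_const 2).div (hpm.add hqm)).aestronglyMeasurable ?_
    filter_upwards [hle] with ω h
    rw [Real.norm_of_nonneg (hnonneg ω), Pi.add_apply]
    linarith [hnonneg ω]
  refine ⟨hint, ?_⟩
  rw [← integral_const_mul, ← integral_add hklPQ hklQP]
  exact integral_mono_ae (hint.const_mul 2) (hklPQ.add hklQP) hle

theorem sq_integral_sub_integral_le {P Q : Measure Ω} [IsProbabilityMeasure P]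
    [IsProbabilityMeasure Q] {X : Ω → ℝ} (hpm : Measurable p) (hqm : Measurable q)
    (hp0 : ∀ ω, 0 ≤ p ω) (hq0 : ∀ ω, 0 ≤ q ω)
    (hP : P = ν.withDensity fun ω => ENNReal.ofReal (p ω))
    (hQ : Q = ν.withDensity fun ω => ENNReal.ofReal (q ω))
    (hXP : MemLp X 2 P) (hXQ : MemLp X 2 Q)
    (hpq : Integrable (fun ω => (p ω - q ω) ^ 2 / (p ω + q ω)) ν) (c : ℝ) :
    (∫ ω, X ω ∂P - ∫ ω, X ω ∂Q) ^ 2 ≤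
      (∫ ω, (X ω - c) ^ 2 ∂P + ∫ ω, (X ω - c) ^ 2 ∂Q) *
        ∫ ω, (p ω - q ω) ^ 2 / (p ω + q ω) ∂ν := by
  subst hP hQ
  have hpu : Integrable (fun ω => p ω * (X ω - c)) ν := (integrable_withDensity_ofReal_iff hpm
    hp0).1 ((hXP.sub (memLp_const c)).integrable one_le_two)
  have hqu : Integrable (fun ω => q ω * (X ω - c)) ν := (integrable_withDensity_ofReal_iff hqm
    hq0).1 ((hXQ.sub (memLp_const c)).integrable one_le_two)
  have hpu2 : Integrable (fun ω => p ω * (X ω - c) ^ 2) ν :=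
    (integrable_withDensity_ofReal_iff hpm hp0).1 (hXP.sub (memLp_const c)).integrable_sq
  have hqu2 : Integrable (fun ω => q ω * (X ω - c) ^ 2) ν :=
    (integrable_withDensity_ofReal_iff hqm hq0).1 (hXQ.sub (memLp_const c)).integrable_sq
  have hdiff : ∫ ω, X ω ∂(ν.withDensity fun ω => ENNReal.ofReal (p ω)) -
      ∫ ω, X ω ∂(ν.withDensity fun ω => ENNReal.ofReal (q ω)) =
      ∫ ω, (p ω - q ω) * (X ω - c) ∂ν := by
    simp_rw [sub_mul]
    rw [integral_sub hpu hqu, ← integral_withDensity_ofReal hpm hp0,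
      ← integral_withDensity_ofReal hqm hq0, integral_sub (hXP.integrable one_le_two)
      (integrable_const c), integral_sub (hXQ.integrable one_le_two) (integrable_const c)]
    simp
  have hsum : ∫ ω, (X ω - c) ^ 2 ∂(ν.withDensity fun ω => ENNReal.ofReal (p ω)) +
      ∫ ω, (X ω - c) ^ 2 ∂(ν.withDensity fun ω => ENNReal.ofReal (q ω)) =
      ∫ ω, (p ω + q ω) * (X ω - c) ^ 2 ∂ν := by
    simp_rw [add_mul]
    rw [integral_add hpu2 hqu2, integral_withDensity_ofReal hpm hp0,
      integral_withDensity_ofReal hqm hq0]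
  rw [hdiff, hsum]
  refine sq_integral_mul_le_integral_mul_sq_mul_integral_sq_div
    (fun ω => add_nonneg (hp0 ω) (hq0 ω)) (fun ω h => by linarith [hp0 ω, hq0 ω])
    ?_ ?_ hpq
  · simp_rw [sub_mul]
    exact (hpu.sub hqu).aestronglyMeasurable
  · simp_rw [add_mul]
    exact hpu2.add hqu2

end SymmetrizedKL

theorem sq_sub_mul_one_div_sub_one_div_four_le_max {a b v w T S : ℝ} (hv : 0 ≤ v) (hT : 0 ≤ T)
    (hS : 0 < S) (hTS : 2 * T ≤ S)
    (h : (a - b) ^ 2 ≤ (v + (a - (a + b) / 2) ^ 2 + (w + (b - (a + b) / 2) ^ 2)) * T) :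
    (a - b) ^ 2 * (1 / S - 1 / 4) ≤ max v w := by
  have hM : v + (a - (a + b) / 2) ^ 2 + (w + (b - (a + b) / 2) ^ 2) ≤
      2 * max v w + (a - b) ^ 2 / 2 := by
    nlinarith [le_max_left v w, le_max_right v w]
  have hd : (a - b) ^ 2 ≤ (2 * max v w + (a - b) ^ 2 / 2) * (S / 2) :=
    h.trans (mul_le_mul hM (by linarith) hT
      (add_nonneg (by linarith [le_max_left v w]) (by positivity)))
  rw [show (a - b) ^ 2 * (1 / S - 1 / 4) = (a - b) ^ 2 * (4 - S) / (4 * S) by field_simp,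
    div_le_iff₀ (by positivity)]
  nlinarith

/-- Change-of-expectation inequality via the symmetrized Kullback-Leibler divergence:
for mutually absolutely continuous `P`, `Q` with densities `p`, `q` w.r.t. `ν` and
finite positive symmetrized KL divergence,
`(E_P[X]-E_Q[X])² (1/(KL(P,Q)+KL(Q,P)) - 1/4) ≤ max(Var_P(X), Var_Q(X))`. -/
theorem stmt2 {Ω : Type*} [MeasurableSpace Ω] (ν P Q : Measure Ω)
    (p q : Ω → ℝ) (hpm : Measurable p) (hqm : Measurable q)
    (hp0 : ∀ ω, 0 ≤ p ω) (hq0 : ∀ ω, 0 ≤ q ω)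
    (hP : P = ν.withDensity fun ω => ENNReal.ofReal (p ω))
    (hQ : Q = ν.withDensity fun ω => ENNReal.ofReal (q ω))
    [IsProbabilityMeasure P] [IsProbabilityMeasure Q]
    (hPQ : P ≪ Q) (hQP : Q ≪ P)
    (hklPQ : Integrable (fun ω => Real.log (p ω / q ω) * p ω) ν)
    (hklQP : Integrable (fun ω => Real.log (q ω / p ω) * q ω) ν)
    (hpos : 0 < (∫ ω, Real.log (p ω / q ω) * p ω ∂ν) +
      ∫ ω, Real.log (q ω / p ω) * q ω ∂ν)
    (X : Ω → ℝ) (hXP : MemLp X 2 P) (hXQ : MemLp X 2 Q) :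
    (∫ ω, X ω ∂P - ∫ ω, X ω ∂Q) ^ 2 *
        (1 / ((∫ ω, Real.log (p ω / q ω) * p ω ∂ν) +
          ∫ ω, Real.log (q ω / p ω) * q ω ∂ν) - 1 / 4) ≤
      max (variance X P) (variance X Q) := by
  have hzero : ∀ᵐ ω ∂ν, p ω = 0 ↔ q ω = 0 := by
    subst hP hQ
    exact ae_eq_zero_iff_eq_zero_of_withDensity_ofReal hpm hqm hp0 hq0 hPQ hQP
  obtain ⟨hint, hle⟩ :=
    integrable_sq_sub_div_add_and_two_mul_integral_le hpm hqm hp0 hq0 hzero hklPQ hklQP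
  have hCS := sq_integral_sub_integral_le hpm hqm hp0 hq0 hP hQ hXP hXQ hint
    ((∫ ω, X ω ∂P + ∫ ω, X ω ∂Q) / 2)
  rw [integral_sub_const_sq hXP, integral_sub_const_sq hXQ] at hCS
  exact sq_sub_mul_one_div_sub_one_div_four_le_max (variance_nonneg X P)
    (integral_nonneg fun ω => div_nonneg (sq_nonneg _) (add_nonneg (hp0 ω) (hq0 ω))) hpos hle hCS
end

section
/- Data processing inequality for χ²-divergence matrices: if K is a Markov kernel and Q_0,…,Q_M are probability measures with Q_j ≪ Q_0 for all j, then χ²(KQ_0,…,KQ_M) ≤ χ²(Q_0,…,Q_M) in the partial order of positive semi-definite matrices, i.e., vᵀ χ²(KQ_0,…,KQ_M) v ≤ vᵀ χ²(Q_0,…,Q_M) v for all v ∈ ℝ^M. -/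
/-!
Write `g = ∑ⱼ vⱼ dQⱼ/dQ₀` and `G = ∑ⱼ vⱼ d(KQⱼ)/d(KQ₀)`, so that the two quadratic forms are
`∫ g² dQ₀ - (∑ⱼ vⱼ)²` and `∫ G² d(KQ₀) - (∑ⱼ vⱼ)²`. Pairing `G` against the mixture
`∑ⱼ vⱼ KQⱼ` in two ways gives `∫ G² d(KQ₀) = ∫ g · KG dQ₀`, where `KG x = ∫ G dK(x)`.
By `2ab ≤ a² + b²` and Jensen's inequality `(KG)² ≤ K(G²)` this is at most
`(∫ g² dQ₀ + ∫ G² d(KQ₀)) / 2`, hence `∫ G² d(KQ₀) ≤ ∫ g² dQ₀`.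
-/

open MeasureTheory ProbabilityTheory Matrix

namespace MeasureTheory.Measure

variable {α β : Type*} [MeasurableSpace α] [MeasurableSpace β] {μ : Measure α}
  {κ : Kernel α β} {f : β → ℝ}

lemma integral_comp (hf : Integrable f (κ ∘ₘ μ)) :
    ∫ y, f y ∂(κ ∘ₘ μ) = ∫ x, ∫ y, f y ∂κ x ∂μ := by
  rw [comp_eq_comp_const_apply] at hf ⊢
  simpa using Kernel.integral_comp hf

lemma integrable_integral_of_integrable_comp (hf : Integrable f (κ ∘ₘ μ)) :
    Integrable (fun x => ∫ y, f y ∂κ x) μ := by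
  rw [comp_eq_comp_const_apply] at hf
  simpa using hf.integral_comp

end MeasureTheory.Measure

section SquareBounds

variable {α β : Type*} [MeasurableSpace α] [MeasurableSpace β]

lemma sq_integral_le_integral_sq {m : Measure β} [IsProbabilityMeasure m] {f : β → ℝ}
    (hf : Integrable f m) (hf2 : Integrable (fun y => f y ^ 2) m) :
    (∫ y, f y ∂m) ^ 2 ≤ ∫ y, f y ^ 2 ∂m :=
  (even_two.convexOn_pow (𝕜 := ℝ)).map_integral_le (continuous_pow 2).continuousOn
    isClosed_univ (Filter.Eventually.of_forall fun _ => Set.mem_univ _) hf hf2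

lemma integral_mul_le_half_integral_sq_add {μ : Measure α} {f g : α → ℝ}
    (hf2 : Integrable (fun x => f x ^ 2) μ) (hg2 : Integrable (fun x => g x ^ 2) μ) :
    ∫ x, f x * g x ∂μ ≤ (∫ x, f x ^ 2 ∂μ + ∫ x, g x ^ 2 ∂μ) / 2 := by
  by_cases hfg : Integrable (fun x => f x * g x) μ
  · rw [← integral_add hf2 hg2, ← integral_div]
    exact integral_mono hfg ((hf2.add hg2).div_const 2) fun x => by
      nlinarith [sq_nonneg (f x - g x)]
  · rw [integral_undef hfg]
    have hf2_nonneg : 0 ≤ ∫ x, f x ^ 2 ∂μ := integral_nonneg fun x => sq_nonneg (f x)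
    have hg2_nonneg : 0 ≤ ∫ x, g x ^ 2 ∂μ := integral_nonneg fun x => sq_nonneg (g x)
    linarith

variable {μ : Measure α} {κ : Kernel α β} [IsMarkovKernel κ] {f : β → ℝ}

lemma ae_sq_integral_le_integral_sq_of_comp (hf : Integrable f (κ ∘ₘ μ))
    (hf2 : Integrable (fun y => f y ^ 2) (κ ∘ₘ μ)) :
    ∀ᵐ x ∂μ, (∫ y, f y ∂κ x) ^ 2 ≤ ∫ y, f y ^ 2 ∂κ x := by
  filter_upwards [Measure.ae_integrable_of_integrable_comp hf,
    Measure.ae_integrable_of_integrable_comp hf2] with x hfx hf2x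
  exact sq_integral_le_integral_sq hfx hf2x

lemma integrable_sq_integral_of_comp (hf : Integrable f (κ ∘ₘ μ))
    (hf2 : Integrable (fun y => f y ^ 2) (κ ∘ₘ μ)) :
    Integrable (fun x => (∫ y, f y ∂κ x) ^ 2) μ := by
  refine (Measure.integrable_integral_of_integrable_comp hf2).mono
    ((Measure.integrable_integral_of_integrable_comp hf).aestronglyMeasurable.pow 2) ?_
  filter_upwards [ae_sq_integral_le_integral_sq_of_comp hf hf2] with x hx
  rw [Real.norm_of_nonneg (sq_nonneg _)]
  exact hx.trans (le_abs_self _)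

lemma integral_sq_integral_le_of_comp (hf : Integrable f (κ ∘ₘ μ))
    (hf2 : Integrable (fun y => f y ^ 2) (κ ∘ₘ μ)) :
    ∫ x, (∫ y, f y ∂κ x) ^ 2 ∂μ ≤ ∫ y, f y ^ 2 ∂(κ ∘ₘ μ) := by
  rw [Measure.integral_comp hf2]
  exact integral_mono_ae (integrable_sq_integral_of_comp hf hf2)
    (Measure.integrable_integral_of_integrable_comp hf2)
    (ae_sq_integral_le_integral_sq_of_comp hf hf2)

end SquareBounds

section ChiSquare

variable {α ι : Type*} [MeasurableSpace α] [Fintype ι]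

noncomputable def chiSqMatrix (μ₀ : Measure α) (μ : ι → Measure α) : Matrix ι ι ℝ :=
  of fun j k => (∫ ω, ((μ j).rnDeriv μ₀ ω).toReal ∂(μ k)) - 1

noncomputable def mixtureDensity (μ₀ : Measure α) (μ : ι → Measure α) (v : ι → ℝ) (ω : α) : ℝ :=
  ∑ j, v j * ((μ j).rnDeriv μ₀ ω).toReal

variable {μ₀ ν : Measure α} {μ : ι → Measure α} {v : ι → ℝ}

lemma integrable_mixtureDensity
    (h : ∀ j, Integrable (fun ω => ((μ j).rnDeriv μ₀ ω).toReal) ν) :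
    Integrable (mixtureDensity μ₀ μ v) ν :=
  integrable_finsetSum _ fun j _ => (h j).const_mul (v j)

lemma integral_mixtureDensity
    (h : ∀ j, Integrable (fun ω => ((μ j).rnDeriv μ₀ ω).toReal) ν) :
    ∫ ω, mixtureDensity μ₀ μ v ω ∂ν = ∑ j, v j * ∫ ω, ((μ j).rnDeriv μ₀ ω).toReal ∂ν := by
  simp only [mixtureDensity]
  rw [integral_finsetSum _ fun j _ => (h j).const_mul (v j)]
  simp_rw [integral_const_mul]

lemma mixtureDensity_mul_eq_sum (h : α → ℝ) (ω : α) :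
    mixtureDensity μ₀ μ v ω * h ω = ∑ j, v j * (((μ j).rnDeriv μ₀ ω).toReal * h ω) := by
  simp only [mixtureDensity, Finset.sum_mul, mul_assoc]

variable [SigmaFinite μ₀] [∀ j, SigmaFinite (μ j)] {h : α → ℝ}

lemma integrable_mixtureDensity_mul (hac : ∀ j, μ j ≪ μ₀) (hh : ∀ j, Integrable h (μ j)) :
    Integrable (fun ω => mixtureDensity μ₀ μ v ω * h ω) μ₀ := by
  simp_rw [mixtureDensity_mul_eq_sum]
  exact integrable_finsetSum _ fun j _ =>
    ((integrable_toReal_rnDeriv_mul_iff (hac j)).2 (hh j)).const_mul (v j)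

lemma integral_mixtureDensity_mul (hac : ∀ j, μ j ≪ μ₀) (hh : ∀ j, Integrable h (μ j)) :
    ∫ ω, mixtureDensity μ₀ μ v ω * h ω ∂μ₀ = ∑ j, v j * ∫ ω, h ω ∂(μ j) := by
  simp_rw [mixtureDensity_mul_eq_sum]
  rw [integral_finsetSum _ fun j _ =>
    ((integrable_toReal_rnDeriv_mul_iff (hac j)).2 (hh j)).const_mul (v j)]
  simp_rw [integral_const_mul, integral_toReal_rnDeriv_mul (hac _)]

lemma dotProduct_chiSqMatrix_mulVec (hac : ∀ j, μ j ≪ μ₀)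
    (hint : ∀ j k, Integrable (fun ω => ((μ j).rnDeriv μ₀ ω).toReal) (μ k)) :
    v ⬝ᵥ (chiSqMatrix μ₀ μ *ᵥ v) = ∫ ω, mixtureDensity μ₀ μ v ω ^ 2 ∂μ₀ - (∑ j, v j) ^ 2 := by
  simp_rw [sq, integral_mixtureDensity_mul hac fun k => integrable_mixtureDensity (hint · k),
    integral_mixtureDensity (hint · _)]
  simp only [dotProduct, mulVec, chiSqMatrix, of_apply, Finset.sum_mul, Finset.mul_sum]
  conv_rhs => rw [Finset.sum_comm]
  simp only [← Finset.sum_sub_distrib]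
  exact Finset.sum_congr rfl fun j _ => Finset.sum_congr rfl fun k _ => by ring

end ChiSquare

section DataProcessing

variable {α β ι : Type*} [MeasurableSpace α] [MeasurableSpace β] [Fintype ι]
  {μ₀ : Measure α} {μ : ι → Measure α} [IsFiniteMeasure μ₀] [∀ j, IsFiniteMeasure (μ j)]
  {κ : Kernel α β} [IsMarkovKernel κ] {v : ι → ℝ}

lemma integral_sq_mixtureDensity_comp_le (hac : ∀ j, μ j ≪ μ₀)
    (hint : ∀ j k, Integrable (fun ω => ((μ j).rnDeriv μ₀ ω).toReal) (μ k))
    (hintκ : ∀ j k,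
      Integrable (fun ω => ((κ ∘ₘ μ j).rnDeriv (κ ∘ₘ μ₀) ω).toReal) (κ ∘ₘ μ k)) :
    ∫ ω, mixtureDensity (κ ∘ₘ μ₀) (fun j => κ ∘ₘ μ j) v ω ^ 2 ∂(κ ∘ₘ μ₀) ≤
      ∫ ω, mixtureDensity μ₀ μ v ω ^ 2 ∂μ₀ := by
  set g := mixtureDensity μ₀ μ v
  set G := mixtureDensity (κ ∘ₘ μ₀) (fun j => κ ∘ₘ μ j) v
  set KG : α → ℝ := fun x => ∫ y, G y ∂κ x
  have hacκ : ∀ j, κ ∘ₘ μ j ≪ κ ∘ₘ μ₀ := fun j => (hac j).comp_right κ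
  have hGj : ∀ k, Integrable G (κ ∘ₘ μ k) := fun k => integrable_mixtureDensity (hintκ · k)
  have hG : Integrable G (κ ∘ₘ μ₀) :=
    integrable_mixtureDensity fun _ => Measure.integrable_toReal_rnDeriv
  have hG2 : Integrable (fun y => G y ^ 2) (κ ∘ₘ μ₀) := by
    simpa only [sq] using integrable_mixtureDensity_mul hacκ hGj
  have hg2 : Integrable (fun x => g x ^ 2) μ₀ := by
    simpa only [sq] using
      integrable_mixtureDensity_mul hac fun k => integrable_mixtureDensity (hint · k)
  have pairing : ∫ y, G y ^ 2 ∂(κ ∘ₘ μ₀) = ∫ x, g x * KG x ∂μ₀ :=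
    calc ∫ y, G y ^ 2 ∂(κ ∘ₘ μ₀) = ∑ k, v k * ∫ y, G y ∂(κ ∘ₘ μ k) := by
          simp_rw [sq]; exact integral_mixtureDensity_mul hacκ hGj
      _ = ∑ k, v k * ∫ x, KG x ∂(μ k) :=
          Finset.sum_congr rfl fun k _ => by rw [Measure.integral_comp (hGj k)]
      _ = ∫ x, g x * KG x ∂μ₀ := (integral_mixtureDensity_mul hac fun k =>
          Measure.integrable_integral_of_integrable_comp (hGj k)).symm
  have amgm := integral_mul_le_half_integral_sq_add hg2 (integrable_sq_integral_of_comp hG hG2)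
  have jensen := integral_sq_integral_le_of_comp hG hG2
  linarith

end DataProcessing

/-- Data processing inequality for chi-square divergence matrices: if `K` is a Markov kernel
and `Q_j ≪ Q_0` for all `j`, then `χ²(KQ_0,…,KQ_M) ≤ χ²(Q_0,…,Q_M)` in the positive
semi-definite order, i.e. `vᵀ χ²(KQ_0,…,KQ_M) v ≤ vᵀ χ²(Q_0,…,Q_M) v` for all `v`. -/
theorem stmt8 {Ω Ω' : Type*} [MeasurableSpace Ω] [MeasurableSpace Ω'] {M : ℕ}
    (Q : Fin (M + 1) → Measure Ω) [∀ j, IsProbabilityMeasure (Q j)]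
    (hAC : ∀ j : Fin M, Q j.succ ≪ Q 0)
    (κ : ProbabilityTheory.Kernel Ω Ω') [IsMarkovKernel κ]
    (hIntQ : ∀ j k : Fin M,
      Integrable (fun ω => ((Q j.succ).rnDeriv (Q 0) ω).toReal) (Q k.succ))
    (hIntKQ : ∀ j k : Fin M,
      Integrable (fun ω => (((Q j.succ).bind κ).rnDeriv ((Q 0).bind κ) ω).toReal)
        ((Q k.succ).bind κ)) :
    ∀ v : Fin M → ℝ,
      v ⬝ᵥ ((Matrix.of fun j k : Fin M =>
          (∫ ω, (((Q j.succ).bind κ).rnDeriv ((Q 0).bind κ) ω).toReal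
            ∂((Q k.succ).bind κ)) - 1) *ᵥ v) ≤
      v ⬝ᵥ ((Matrix.of fun j k : Fin M =>
          (∫ ω, ((Q j.succ).rnDeriv (Q 0) ω).toReal ∂(Q k.succ)) - 1) *ᵥ v) := by
  intro v
  change v ⬝ᵥ (chiSqMatrix (κ ∘ₘ Q 0) (fun j => κ ∘ₘ Q j.succ) *ᵥ v) ≤
    v ⬝ᵥ (chiSqMatrix (Q 0) (fun j => Q j.succ) *ᵥ v)
  rw [dotProduct_chiSqMatrix_mulVec (fun j => (hAC j).comp_right κ) hIntKQ,
    dotProduct_chiSqMatrix_mulVec hAC hIntQ]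
  exact sub_le_sub_right (integral_sq_mixtureDensity_comp_le hAC hIntQ hIntKQ) _
end
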